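/- Let f(μ, t) = (1/|S|)Σ_{w∈S}(1/2)(‖i_w − μ‖² + d t) + (|S|/(2σ_P² λ))‖μ − ō‖² + (|S| d/(2λ))(ln(σ_P²/t) + t/σ_P²), where ō = (1/|S|)Σ_{w∈S} o_w. This is the expected objective after applying the Gaussian expectation E_{h~N(μ,tI)}[(1/2)‖i_w − h‖²] = (1/2)‖i_w − μ‖² + (d/2)t. Then f is jointly minimized over ℝ^d × (0,∞) at μ* = (1/((1+α)|S|)) Σ_{w∈S}(i_w + α o_w) with α = |S|/(σ_P² λ), and t* satisfying 1/2 + (|S|/(2λ))(−1/t* + 1/σ_P²) = 0, i.e., t* = (|S| σ_P²)/(|S| + λ σ_P²). -/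

import Mathlib

/-!
The objective separates as `f μ t = F μ + G t`. The `μ`-part `F` is a weighted sum of squared
distances, so by the parallel-axis identity `∑ aᵥ ‖xᵥ - μ‖² = ∑ aᵥ ‖xᵥ - c‖² + (∑ aᵥ) ‖μ - c‖²`
(with `c` the weighted barycenter), applied first to the points `i_w` and then to their mean
and `ō`, it equals `F μ* + (1 + α)/2 ‖μ - μ*‖²`. The `t`-part is `a t - c log t` up to a
constant, and `a t - c log t` exceeds its value at `c / a = t*` by `c (x - 1 - log x)` with
`x = a t / c`, which is positive unless `x = 1` since `log x ≤ x - 1`.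
-/

open Finset

section

variable {ι E : Type*} [NormedAddCommGroup E] [InnerProductSpace ℝ E]

theorem sum_mul_norm_sub_sq_of_smul_eq (s : Finset ι) (a : ι → ℝ) (x : ι → E) {c : E}
    (hc : (∑ w ∈ s, a w) • c = ∑ w ∈ s, a w • x w) (μ : E) :
    ∑ w ∈ s, a w * ‖x w - μ‖ ^ 2 =
      ∑ w ∈ s, a w * ‖x w - c‖ ^ 2 + (∑ w ∈ s, a w) * ‖μ - c‖ ^ 2 := by
  have hcross : ∑ w ∈ s, a w * inner ℝ (x w - c) (μ - c) = 0 := by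
    simp_rw [← real_inner_smul_left, ← sum_inner, smul_sub, sum_sub_distrib, ← sum_smul, hc,
      sub_self, inner_zero_left]
  calc ∑ w ∈ s, a w * ‖x w - μ‖ ^ 2
      = ∑ w ∈ s, (a w * ‖x w - c‖ ^ 2 - 2 * (a w * inner ℝ (x w - c) (μ - c))
          + a w * ‖μ - c‖ ^ 2) := by
        refine sum_congr rfl fun w _ => ?_
        rw [show x w - μ = (x w - c) - (μ - c) by abel, norm_sub_sq_real]
        ring
    _ = _ := by
        rw [sum_add_distrib, sum_sub_distrib, ← mul_sum, hcross, ← sum_mul]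
        ring

theorem sum_norm_sub_sq_eq_add_card_mul (S : Finset ι) (hS : S.Nonempty) (x : ι → E) (μ : E) :
    ∑ w ∈ S, ‖x w - μ‖ ^ 2 =
      ∑ w ∈ S, ‖x w - (1 / (S.card : ℝ)) • ∑ w ∈ S, x w‖ ^ 2 +
        S.card * ‖μ - (1 / (S.card : ℝ)) • ∑ w ∈ S, x w‖ ^ 2 := by
  have hn : (S.card : ℝ) ≠ 0 := by exact_mod_cast hS.card_pos.ne'
  simpa using sum_mul_norm_sub_sq_of_smul_eq S (fun _ => 1) x (μ := μ)
    (c := (1 / (S.card : ℝ)) • ∑ w ∈ S, x w) (by simp [smul_smul, hn])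

theorem norm_sub_sq_add_mul_norm_sub_sq (p q : E) (α : ℝ) {c : E} (hc : (1 + α) • c = p + α • q)
    (μ : E) :
    ‖μ - p‖ ^ 2 + α * ‖μ - q‖ ^ 2 = ‖c - p‖ ^ 2 + α * ‖c - q‖ ^ 2 + (1 + α) * ‖μ - c‖ ^ 2 := by
  have := sum_mul_norm_sub_sq_of_smul_eq univ ![1, α] ![p, q] (c := c) (by simpa using hc) μ
  simp only [Fin.sum_univ_two, Matrix.cons_val_zero, Matrix.cons_val_one, one_mul] at this
  simpa only [norm_sub_rev] using this

theorem mean_norm_sub_sq_add_mul_norm_sub_sq (S : Finset ι) (hS : S.Nonempty) (i o : ι → E)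
    (α : ℝ) {m : E} (hm : ((1 + α) * S.card) • m = ∑ w ∈ S, (i w + α • o w)) (μ : E) :
    1 / (S.card : ℝ) * ∑ w ∈ S, ‖i w - μ‖ ^ 2 + α * ‖μ - (1 / (S.card : ℝ)) • ∑ w ∈ S, o w‖ ^ 2 =
      1 / (S.card : ℝ) * ∑ w ∈ S, ‖i w - m‖ ^ 2 +
        α * ‖m - (1 / (S.card : ℝ)) • ∑ w ∈ S, o w‖ ^ 2 + (1 + α) * ‖μ - m‖ ^ 2 := by
  have hn : (S.card : ℝ) ≠ 0 := by exact_mod_cast hS.card_pos.ne'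
  have hm' : (1 + α) • m = (1 / (S.card : ℝ)) • ∑ w ∈ S, i w +
      α • (1 / (S.card : ℝ)) • ∑ w ∈ S, o w := by
    rw [smul_comm α, ← smul_add, smul_sum, ← sum_add_distrib, ← hm, smul_smul]
    field_simp
  have hmean := sum_norm_sub_sq_eq_add_card_mul S hS i
  rw [hmean μ, hmean m]
  field_simp
  linear_combination (S.card : ℝ) * norm_sub_sq_add_mul_norm_sub_sq _ _ α hm' μ

end

theorem mul_sub_mul_log_eq {a c t : ℝ} (ha : 0 < a) (hc : 0 < c) (ht : 0 < t) :
    a * t - c * Real.log t =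
      a * (c / a) - c * Real.log (c / a) + c * (a * t / c - 1 - Real.log (a * t / c)) := by
  rw [Real.log_div (by positivity) hc.ne', Real.log_mul ha.ne' ht.ne', Real.log_div hc.ne' ha.ne']
  field_simp
  ring

theorem mul_div_sub_mul_log_div_le {a c t : ℝ} (ha : 0 < a) (hc : 0 < c) (ht : 0 < t) :
    a * (c / a) - c * Real.log (c / a) ≤ a * t - c * Real.log t := by
  have := Real.log_le_sub_one_of_pos (show 0 < a * t / c by positivity)
  rw [mul_sub_mul_log_eq ha hc ht]
  nlinarith

theorem eq_div_of_mul_sub_mul_log_eq {a c t : ℝ} (ha : 0 < a) (hc : 0 < c) (ht : 0 < t)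
    (h : a * t - c * Real.log t = a * (c / a) - c * Real.log (c / a)) : t = c / a := by
  by_contra hne
  have hne' : a * t / c ≠ 1 := by
    intro h1
    apply hne
    field_simp at h1 ⊢
    linarith
  have := Real.log_lt_sub_one_of_pos (show 0 < a * t / c by positivity) hne'
  rw [mul_sub_mul_log_eq ha hc ht] at h
  nlinarith

/-- The expected objective
`f(μ,t) = (1/|S|)Σ_{w∈S}(1/2)(‖i_w − μ‖² + d t) + (|S|/(2σ_P²λ))‖μ − ō‖² +
(|S|d/(2λ))(ln(σ_P²/t) + t/σ_P²)` is jointly uniquely minimized over `ℝ^d × (0,∞)` at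
`μ* = (1/((1+α)|S|)) Σ_{w∈S}(i_w + α o_w)` with `α = |S|/(σ_P² λ)`, and at `t*` satisfying
`1/2 + (|S|/(2λ))(−1/t* + 1/σ_P²) = 0`, i.e. `t* = |S|σ_P²/(|S| + λσ_P²)`. -/
theorem stmt_17 {ι : Type*} (d : ℕ) (hd : 1 ≤ d) (S : Finset ι) (hS : S.Nonempty)
    (i o : ι → EuclideanSpace ℝ (Fin d)) (σP2 lam : ℝ) (hP : 0 < σP2) (hl : 0 < lam) :
    let obar : EuclideanSpace ℝ (Fin d) := (1 / (S.card : ℝ)) • ∑ w ∈ S, o w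
    let f : EuclideanSpace ℝ (Fin d) → ℝ → ℝ := fun μ t =>
      (1 / (S.card : ℝ)) * ∑ w ∈ S, (1 / 2 : ℝ) * (‖i w - μ‖ ^ 2 + (d : ℝ) * t) +
        ((S.card : ℝ) / (2 * σP2 * lam)) * ‖μ - obar‖ ^ 2 +
        ((S.card : ℝ) * (d : ℝ) / (2 * lam)) * (Real.log (σP2 / t) + t / σP2)
    let α : ℝ := (S.card : ℝ) / (σP2 * lam)
    let μstar : EuclideanSpace ℝ (Fin d) :=
      (1 / ((1 + α) * (S.card : ℝ))) • ∑ w ∈ S, (i w + α • o w)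
    let tstar : ℝ := (S.card : ℝ) * σP2 / ((S.card : ℝ) + lam * σP2)
    (1 / 2 + ((S.card : ℝ) / (2 * lam)) * (-1 / tstar + 1 / σP2) = 0) ∧
      ∀ (μ : EuclideanSpace ℝ (Fin d)) (t : ℝ), 0 < t →
        f μstar tstar ≤ f μ t ∧ (f μ t = f μstar tstar → μ = μstar ∧ t = tstar) := by
  intro obar f α μstar tstar
  have hn : (0 : ℝ) < S.card := by exact_mod_cast hS.card_pos
  have hα : 0 < α := by positivity
  set a : ℝ := d / 2 + S.card * d / (2 * lam * σP2)
  set c : ℝ := S.card * d / (2 * lam)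
  have ha : 0 < a := by positivity
  have hc : 0 < c := by positivity
  have htstar : tstar = c / a := by simp only [tstar, a, c]; field_simp; ring
  have hsplit : ∀ ν s, 0 < s → f ν s =
      (1 / (S.card : ℝ) * ∑ w ∈ S, ‖i w - ν‖ ^ 2 +
        α * ‖ν - (1 / (S.card : ℝ)) • ∑ w ∈ S, o w‖ ^ 2) / 2 +
      (a * s - c * Real.log s) + c * Real.log σP2 := by
    intro ν s hs
    simp only [f, mul_add, sum_add_distrib, ← mul_sum, sum_const, nsmul_eq_mul, α, a, c,
      Real.log_div hP.ne' hs.ne']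
    field_simp
    ring
  have hμ := mean_norm_sub_sq_add_mul_norm_sub_sq S hS i o α (m := μstar)
    (by rw [smul_smul, mul_one_div_cancel (by positivity), one_smul])
  refine ⟨by simp only [tstar]; field_simp; ring, fun μ t ht => ?_⟩
  have htstar_pos : 0 < tstar := by positivity
  rw [hsplit μ t ht, hsplit μstar tstar htstar_pos, hμ μ, htstar]
  have hlog := mul_div_sub_mul_log_div_le ha hc ht
  have h1α : 0 < 1 + α := by linarith
  have hsq : 0 ≤ (1 + α) * ‖μ - μstar‖ ^ 2 := mul_nonneg h1α.le (sq_nonneg _)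
  refine ⟨by linarith, fun heq => ?_⟩
  have hμeq : (1 + α) * ‖μ - μstar‖ ^ 2 = 0 := by nlinarith
  refine ⟨?_, eq_div_of_mul_sub_mul_log_eq ha hc ht (by linarith)⟩
  simpa [h1α.ne', sub_eq_zero] using hμeq
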